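/- Fix m ≥ 2 and let B_m be the weighted complete bipartite graph with vertex set {a_1,…,a_m, b_1,…,b_m} and weights w(a_i,b_j) = 1 for all i,j and weight 0 on all pairs within {a_1,…,a_m} and within {b_1,…,b_m}. Let T_cat be the hierarchical clustering tree on B_m whose left subtree is the caterpillar on the leaves {a_1, b_2, b_3, …, b_m} with internal node leaf sets (from bottom up) {a_1,b_2}, {a_1,b_2,b_3}, …, {a_1,b_2,…,b_m}, whose right subtree is the analogous caterpillar on {b_1, a_2, a_3, …, a_m}, and whose root joins the two subtrees. Then rev(T_cat) = (m−1)(3m−2). -/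

import Mathlib

open Finset

/-- A hierarchical clustering tree: a rooted binary tree with leaves labelled by vertices. -/
inductive HC (V : Type*) where
  | leaf : V → HC V
  | node : HC V → HC V → HC V

namespace HC

variable {V : Type*}

/-- The list of leaf labels of a tree, left to right. -/
def leafList : HC V → List V
  | .leaf v => [v]
  | .node l r => leafList l ++ leafList r

/-- The set of leaf labels of a tree. -/
def leaves [DecidableEq V] (t : HC V) : Finset V :=
  t.leafList.toFinset

/-- `t.cluster i j` is the leaf set of the subtree of `t` rooted at the least common
ancestor of the leaves `i` and `j` (i.e. `leaves(T[i ∨ j])`). -/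
def cluster [DecidableEq V] : HC V → V → V → Finset V
  | .leaf v, _, _ => {v}
  | .node l r, i, j =>
    if i ∈ l.leaves ∧ j ∈ l.leaves then l.cluster i j
    else if i ∈ r.leaves ∧ j ∈ r.leaves then r.cluster i j
    else (HC.node l r).leaves

/-- `t` is a hierarchical clustering tree on the whole vertex type `V`:
its leaves are in bijection with `V`. -/
def IsTreeOn [Fintype V] [DecidableEq V] (t : HC V) : Prop :=
  t.leafList.Nodup ∧ t.leaves = Finset.univ

/-- Sum of `f A B` over all internal nodes of the tree, where `A`, `B` are the
leaf sets of the two children of the internal node. -/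
def internalSum [DecidableEq V] (f : Finset V → Finset V → ℝ) : HC V → ℝ
  | .leaf _ => 0
  | .node l r => f l.leaves r.leaves + internalSum f l + internalSum f r

/-- The list of all subtrees of a tree. -/
def subtreesList : HC V → List (HC V)
  | .leaf v => [.leaf v]
  | .node l r => .node l r :: (subtreesList l ++ subtreesList r)

/-- Dasgupta's cost: sum over unordered pairs `{i,j}` of distinct vertices of
`w i j * |leaves(T[i ∨ j])|`. -/
noncomputable def cost [Fintype V] [DecidableEq V] (w : V → V → ℝ) (t : HC V) : ℝ :=
  (1 / 2) * ∑ p ∈ Finset.univ.offDiag, w p.1 p.2 * ((t.cluster p.1 p.2).card : ℝ)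

/-- Moseley–Wang revenue: sum over unordered pairs `{i,j}` of distinct vertices of
`w i j * |nonleaves(T[i ∨ j])|`. -/
noncomputable def rev [Fintype V] [DecidableEq V] (w : V → V → ℝ) (t : HC V) : ℝ :=
  (1 / 2) * ∑ p ∈ Finset.univ.offDiag,
    w p.1 p.2 * ((Finset.univ \ t.cluster p.1 p.2).card : ℝ)

/-- Cohen-Addad et al.'s value: the same formula as cost, used for dissimilarity weights. -/
noncomputable def val [Fintype V] [DecidableEq V] (w : V → V → ℝ) (t : HC V) : ℝ :=
  cost w t

end HC

/-- The total weight `W`: the sum of `w i j` over unordered pairs of distinct vertices. -/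
noncomputable def totalWeight {V : Type*} [Fintype V] [DecidableEq V] (w : V → V → ℝ) : ℝ :=
  (1 / 2) * ∑ p ∈ Finset.univ.offDiag, w p.1 p.2

/-- The merge cost of merging disjoint clusters `A` and `B`. -/
noncomputable def mergeCost {V : Type*} [Fintype V] [DecidableEq V] (w : V → V → ℝ) (A B : Finset V) : ℝ :=
  (B.card : ℝ) * ∑ a ∈ A, ∑ c ∈ Finset.univ \ (A ∪ B), w a c
    + (A.card : ℝ) * ∑ b ∈ B, ∑ c ∈ Finset.univ \ (A ∪ B), w b c

/-- The merge revenue of merging disjoint clusters `A` and `B`. -/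
noncomputable def mergeRev {V : Type*} [Fintype V] (w : V → V → ℝ) (A B : Finset V) : ℝ :=
  ((Fintype.card V : ℝ) - (A.card : ℝ) - (B.card : ℝ)) * ∑ a ∈ A, ∑ b ∈ B, w a b

/-- The average linkage between disjoint nonempty clusters `A` and `B`. -/
noncomputable def avgLinkage {V : Type*} (w : V → V → ℝ) (A B : Finset V) : ℝ :=
  (1 / ((A.card : ℝ) * (B.card : ℝ))) * ∑ a ∈ A, ∑ b ∈ B, w a b

/-- A matching encoded as an involution `f : V → V`: the matched pairs are the pairs
`{v, f v}` with `f v ≠ v`; its weight is the sum of weights of matched pairs. -/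
noncomputable def matchingWeight {V : Type*} [Fintype V] [DecidableEq V] (w : V → V → ℝ) (f : V → V) : ℝ :=
  (1 / 2) * ∑ v ∈ Finset.univ.filter (fun v => f v ≠ v), w v (f v)

/-- A perfect matching encoded as a fixed-point-free involution. -/
def IsPerfectMatching {V : Type*} (f : V → V) : Prop :=
  (∀ v, f (f v) = v) ∧ ∀ v, f v ≠ v


/-- The complete bipartite weighted graph `B_m`: vertices `a_1,...,a_m` (left) and
`b_1,...,b_m` (right), `w(a_i, b_j) = 1` for all `i, j`, and weight `0` within each side. -/
noncomputable def wB (m : ℕ) : (Fin m ⊕ Fin m) → (Fin m ⊕ Fin m) → ℝ :=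
  fun x y =>
    match x, y with
    | Sum.inl _, Sum.inr _ => 1
    | Sum.inr _, Sum.inl _ => 1
    | _, _ => 0

/-- The caterpillar tree on leaves `x 0, x 1, ..., x k`: start from the leaf `x 0` and
repeatedly join the current tree with the next leaf under a new internal node. -/
def caterpillar {V : Type*} (x : ℕ → V) : ℕ → HC V
  | 0 => HC.leaf (x 0)
  | k + 1 => HC.node (caterpillar x k) (HC.leaf (x (k + 1)))


/-!
Writing `a_{i+1} = inl i` and `b_{j+1} = inr j`, only the pairs `(a_i, b_j)` carry weight.
If the pair lies inside one caterpillar, say as its leaves `x_0` and `x_k`, the least common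
ancestor is the `k`-th spine node, whose cluster `{x_0, …, x_k}` leaves `2m - k - 1` vertices
outside; this happens exactly for `(a_1, b_{k+1})` and `(b_1, a_{k+1})`, `1 ≤ k ≤ m - 1`. Every
other pair is separated at the root and earns nothing. Hence
`rev = 2 ∑_{k=1}^{m-1} (2m - k - 1) = (m - 1)(3m - 2)`.
-/

namespace HC

variable {V : Type*} [DecidableEq V]

theorem cluster_comm (t : HC V) (i j : V) : t.cluster i j = t.cluster j i := by
  induction t with
  | leaf v => rfl
  | node l r ihl ihr => simp only [cluster, and_comm, ihl, ihr]

theorem leaves_node (l r : HC V) : (node l r).leaves = l.leaves ∪ r.leaves := by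
  simp [leaves, leafList]

theorem disjoint_leaves_of_nodup {l r : HC V} (h : (node l r).leafList.Nodup) :
    Disjoint l.leaves r.leaves :=
  List.disjoint_toFinset_iff_disjoint.mpr (List.disjoint_of_nodup_append h)

theorem cluster_node_of_mem_left {l r : HC V} {i j : V} (hi : i ∈ l.leaves)
    (hj : j ∈ l.leaves) :
    (node l r).cluster i j = l.cluster i j := by
  simp [cluster, hi, hj]

theorem cluster_node_of_mem_right {l r : HC V} {i j : V} (hlr : Disjoint l.leaves r.leaves)
    (hi : i ∈ r.leaves) (hj : j ∈ r.leaves) : (node l r).cluster i j = r.cluster i j := by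
  simp [cluster, hi, hj, Finset.disjoint_right.mp hlr hi]

theorem cluster_node_of_mem_left_of_mem_right {l r : HC V} {i j : V}
    (hlr : Disjoint l.leaves r.leaves) (hi : i ∈ l.leaves) (hj : j ∈ r.leaves) :
    (node l r).cluster i j = (node l r).leaves := by
  simp [cluster, Finset.disjoint_left.mp hlr hi, Finset.disjoint_right.mp hlr hj]

section Fintype

variable [Fintype V]

theorem isTreeOn_of_leaves_eq_univ {t : HC V} (hleaves : t.leaves = univ)
    (hlen : t.leafList.length = Fintype.card V) : t.IsTreeOn := by
  refine ⟨Multiset.coe_nodup.mp (Multiset.toFinset_card_eq_card_iff_nodup.mp ?_), hleaves⟩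
  change t.leaves.card = t.leafList.length
  rw [hleaves, hlen, card_univ]

theorem rev_eq_half_sum_sum {w : V → V → ℝ} (hw : ∀ v, w v v = 0) (t : HC V) :
    t.rev w = 1 / 2 * ∑ u, ∑ v, w u v * ((univ \ t.cluster u v).card : ℝ) := by
  rw [rev, ← Finset.sum_product', Finset.sum_subset (subset_univ univ.offDiag),
    univ_product_univ]
  rintro ⟨u, v⟩ - huv
  obtain rfl : u = v := by simpa using huv
  rw [hw, zero_mul]

end Fintype

end HC

theorem rev_wB {m : ℕ} (t : HC (Fin m ⊕ Fin m)) :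
    t.rev (wB m) = ∑ i, ∑ j, ((univ \ t.cluster (.inl i) (.inr j)).card : ℝ) := by
  rw [HC.rev_eq_half_sum_sum (by rintro (_ | _) <;> rfl)]
  simp only [Fintype.sum_sum_type, wB, zero_mul, one_mul, sum_const_zero, add_zero, zero_add]
  rw [Finset.sum_comm (f := fun j i => ((univ \ t.cluster (.inr j) (.inl i)).card : ℝ))]
  simp only [HC.cluster_comm t (.inr _)]
  ring

section Caterpillar

variable {V : Type*}

theorem leafList_caterpillar (x : ℕ → V) (k : ℕ) :
    (caterpillar x k).leafList = (List.range (k + 1)).map x := by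
  induction k with
  | zero => rfl
  | succ k ih => simp [caterpillar, HC.leafList, ih, List.range_succ]

theorem nodup_leafList_caterpillar_of_le {x : ℕ → V} {j k : ℕ}
    (hx : (caterpillar x k).leafList.Nodup) (hjk : j ≤ k) :
    (caterpillar x j).leafList.Nodup := by
  rw [leafList_caterpillar] at hx ⊢
  refine hx.sublist (List.Sublist.map _ ?_)
  simpa using (List.range_sublist.mpr (by omega : j + 1 ≤ k + 1))

variable [DecidableEq V]

theorem mem_leaves_caterpillar (x : ℕ → V) {i k : ℕ} (hik : i ≤ k) :
    x i ∈ (caterpillar x k).leaves := by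
  simp only [HC.leaves, leafList_caterpillar, List.mem_toFinset, List.mem_map, List.mem_range]
  exact ⟨i, by omega, rfl⟩

theorem card_leaves_caterpillar {x : ℕ → V} {k : ℕ} (hx : (caterpillar x k).leafList.Nodup) :
    (caterpillar x k).leaves.card = k + 1 := by
  rw [HC.leaves, List.toFinset_card_of_nodup hx, leafList_caterpillar, List.length_map,
    List.length_range]

theorem cluster_caterpillar {x : ℕ → V} {i j k : ℕ} (hx : (caterpillar x k).leafList.Nodup)
    (hij : i < j) (hjk : j ≤ k) :
    (caterpillar x k).cluster (x i) (x j) = (caterpillar x j).leaves := by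
  induction k with
  | zero => omega
  | succ k ih =>
    rcases Nat.lt_or_eq_of_le hjk with hjk | rfl
    · rw [caterpillar, HC.cluster_node_of_mem_left (mem_leaves_caterpillar x (by omega))
        (mem_leaves_caterpillar x (by omega))]
      exact ih (nodup_leafList_caterpillar_of_le hx (by omega)) (by omega)
    · rw [caterpillar] at hx ⊢
      exact HC.cluster_node_of_mem_left_of_mem_right (HC.disjoint_leaves_of_nodup hx)
        (mem_leaves_caterpillar x (by omega)) (by simp [HC.leaves, HC.leafList])

theorem card_compl_cluster_caterpillar [Fintype V] {x : ℕ → V} {i j k : ℕ}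
    (hx : (caterpillar x k).leafList.Nodup) (hij : i < j) (hjk : j ≤ k) :
    (univ \ (caterpillar x k).cluster (x i) (x j)).card = Fintype.card V - (j + 1) := by
  rw [card_univ_sdiff, cluster_caterpillar hx hij hjk,
    card_leaves_caterpillar (nodup_leafList_caterpillar_of_le hx hjk)]

end Caterpillar

theorem sum_fin_two_mul_sub_val (n : ℕ) :
    ∑ j : Fin n, (2 * n - j : ℝ) = n * (3 * n + 1) / 2 := by
  induction n with
  | zero => simp
  | succ n ih =>
    rw [Fin.sum_univ_castSucc]
    simp only [Fin.val_castSucc, Fin.val_last]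
    have shift : ∀ j : Fin n, (2 * ((n + 1 : ℕ) : ℝ) - j) = (2 * n - j) + 2 := fun j => by
      push_cast; ring
    rw [Finset.sum_congr rfl fun j _ => shift j, sum_add_distrib, ih]
    simp only [sum_const, card_univ, Fintype.card_fin, nsmul_eq_mul, Nat.cast_add, Nat.cast_one]
    ring

section TwoCaterpillars

variable {n : ℕ} {xL xR : ℕ → Fin (n + 1) ⊕ Fin (n + 1)}

theorem isTreeOn_two_caterpillars
    (hL0 : xL 0 = .inl 0) (hL : ∀ j : Fin n, xL (j + 1) = .inr j.succ)
    (hR0 : xR 0 = .inr 0) (hR : ∀ i : Fin n, xR (i + 1) = .inl i.succ) :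
    (HC.node (caterpillar xL n) (caterpillar xR n)).IsTreeOn := by
  refine HC.isTreeOn_of_leaves_eq_univ (eq_univ_of_forall ?_) ?_
  · rw [HC.leaves_node]
    rintro (i | j)
    · cases i using Fin.cases with
      | zero => exact mem_union_left _ (hL0 ▸ mem_leaves_caterpillar xL (Nat.zero_le n))
      | succ i => exact mem_union_right _ (hR i ▸ mem_leaves_caterpillar xR i.isLt)
    · cases j using Fin.cases with
      | zero => exact mem_union_right _ (hR0 ▸ mem_leaves_caterpillar xR (Nat.zero_le n))
      | succ j => exact mem_union_left _ (hL j ▸ mem_leaves_caterpillar xL j.isLt)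
  · simp only [HC.leafList, leafList_caterpillar, List.length_append, List.length_map,
      List.length_range, Fintype.card_sum, Fintype.card_fin]

theorem rev_wB_two_caterpillars
    (hL0 : xL 0 = .inl 0) (hL : ∀ j : Fin n, xL (j + 1) = .inr j.succ)
    (hR0 : xR 0 = .inr 0) (hR : ∀ i : Fin n, xR (i + 1) = .inl i.succ) :
    (HC.node (caterpillar xL n) (caterpillar xR n)).rev (wB (n + 1)) = n * (3 * n + 1) := by
  set L := caterpillar xL n
  set R := caterpillar xR n
  have hT : (HC.node L R).IsTreeOn := isTreeOn_two_caterpillars hL0 hL hR0 hR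
  have hlr : Disjoint L.leaves R.leaves := HC.disjoint_leaves_of_nodup hT.1
  have across : ∀ {u v}, u ∈ L.leaves → v ∈ R.leaves →
      (univ \ (HC.node L R).cluster u v).card = 0 := fun hu hv => by
    rw [HC.cluster_node_of_mem_left_of_mem_right hlr hu hv, hT.2, Finset.sdiff_self, card_empty]
  have h00 : (univ \ (HC.node L R).cluster (.inl 0) (.inr 0)).card = 0 :=
    across (hL0 ▸ mem_leaves_caterpillar xL (Nat.zero_le n))
      (hR0 ▸ mem_leaves_caterpillar xR (Nat.zero_le n))
  have hss : ∀ i j : Fin n,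
      (univ \ (HC.node L R).cluster (.inl i.succ) (.inr j.succ)).card = 0 := fun i j => by
    rw [HC.cluster_comm]
    exact across (hL j ▸ mem_leaves_caterpillar xL j.isLt)
      (hR i ▸ mem_leaves_caterpillar xR i.isLt)
  have h0s : ∀ j : Fin n,
      ((univ \ (HC.node L R).cluster (.inl 0) (.inr j.succ)).card : ℝ) = 2 * n - j := by
    intro j
    rw [← hL0, ← hL, HC.cluster_node_of_mem_left (mem_leaves_caterpillar xL (Nat.zero_le n))
      (mem_leaves_caterpillar xL j.isLt),
      card_compl_cluster_caterpillar hT.1.of_append_left (by omega) j.isLt,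
      Fintype.card_sum, Fintype.card_fin, Nat.cast_sub (by omega)]
    push_cast
    ring
  have hs0 : ∀ i : Fin n,
      ((univ \ (HC.node L R).cluster (.inl i.succ) (.inr 0)).card : ℝ) = 2 * n - i := by
    intro i
    rw [← hR0, ← hR, HC.cluster_comm, HC.cluster_node_of_mem_right hlr
      (mem_leaves_caterpillar xR (Nat.zero_le n)) (mem_leaves_caterpillar xR i.isLt),
      card_compl_cluster_caterpillar hT.1.of_append_right (by omega) i.isLt,
      Fintype.card_sum, Fintype.card_fin, Nat.cast_sub (by omega)]
    push_cast
    ring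
  rw [rev_wB]
  simp only [Fin.sum_univ_succ, h00, h0s, hs0, hss, CharP.cast_eq_zero, sum_const_zero, add_zero,
    zero_add, sum_fin_two_mul_sub_val]
  ring

end TwoCaterpillars

/-- On the complete bipartite graph `B_m` (`m ≥ 2`), the tree `T_cat` joining the
caterpillar on the leaves `a_1, b_2, b_3, ..., b_m` (bottom-up) with the caterpillar on the
leaves `b_1, a_2, a_3, ..., a_m` has revenue `(m − 1)(3m − 2)`. -/
theorem stmt18 (m : ℕ) (hm : 2 ≤ m) :
    HC.rev (wB m)
      (HC.node
        (caterpillar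
          (fun k => if k = 0 then (Sum.inl ⟨0, by omega⟩ : Fin m ⊕ Fin m)
            else Sum.inr ⟨k % m, Nat.mod_lt _ (by omega)⟩) (m - 1))
        (caterpillar
          (fun k => if k = 0 then (Sum.inr ⟨0, by omega⟩ : Fin m ⊕ Fin m)
            else Sum.inl ⟨k % m, Nat.mod_lt _ (by omega)⟩) (m - 1))) =
      ((m : ℝ) - 1) * (3 * (m : ℝ) - 2) := by
  obtain ⟨n, rfl⟩ : ∃ n, m = n + 1 := ⟨m - 1, by omega⟩
  rw [Nat.add_sub_cancel, rev_wB_two_caterpillars rfl (fun j => ?_) rfl (fun i => ?_)]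
  · push_cast
    ring
  · simp [Fin.ext_iff, Nat.mod_eq_of_lt (Nat.succ_lt_succ j.isLt)]
  · simp [Fin.ext_iff, Nat.mod_eq_of_lt (Nat.succ_lt_succ i.isLt)]
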